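/- Let H and G be real Hilbert spaces and adopt the primal-dual algorithm setting with ρ = 0 and χ = 0 (so A and B are monotone), θ_k ≡ 1, τ_k ≡ τ ∈ (0,2β), γ_k ≡ γ ∈ (0,2δ), and the strict parameter condition ‖L‖² < (1/τ − 1/(2β))(1/γ − 1/(2δ)). Assume that a primal-dual solution exists. Then the sequences (p^k) and (η^k) are bounded, and the residuals converge strongly to zero: x^k − p^k → 0, u^k − η^k → 0, η^{k+1} − u^k → 0, and p^{k+1} − x^k → 0 as k → ∞. -/

import Mathlib

open RealInnerProductSpace Filter Topology

/-!
Fix a primal-dual solution `(x̂, û)` and a weight `a` with `‖L‖² / Q < a < P`, where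
`P = 1/τ - 1/(2β)` and `Q = 1/γ - 1/(2δ)`; the strict parameter condition is exactly what makes
such an `a` exist. Monotonicity of `A` and `B`, cocoercivity of `C` and `D`, the averagedness of
`T` and the Pythagorean identity for `P_V` combine into the descent inequality

  `Eₖ₊₁ + (P - a)‖pᵏ⁺¹ - xᵏ‖² + (Q - ‖L‖²/a)‖ηᵏ⁺¹ - uᵏ‖² + (1/γ)‖uᵏ⁺¹ - ηᵏ⁺¹‖²
      + ((1-α)/(ατ))‖xᵏ⁺¹ - pᵏ⁺¹‖² ≤ Eₖ`

for the energy `Eₖ = (1/τ)‖xᵏ - x̂‖² + (1/γ)‖uᵏ - û‖² + 2⟪L(x̄ᵏ - xᵏ), uᵏ - û⟫ + a‖x̄ᵏ - xᵏ‖²`,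
the cross term being absorbed by Young's inequality. Young's inequality also bounds `Eₖ` below by
`(1/τ)‖xᵏ - x̂‖² + (1/γ - ‖L‖²/a)‖uᵏ - û‖² ≥ 0`. Hence `Eₖ` is nonincreasing and convergent, the
residuals are square-summable, and `xᵏ`, `uᵏ` (so also `pᵏ`, `ηᵏ`) stay bounded.
-/

def IsMonotoneOperator {E : Type*} [NormedAddCommGroup E] [InnerProductSpace ℝ E]
    (M : E → Set E) : Prop :=
  ∀ x y u v, u ∈ M x → v ∈ M y → 0 ≤ ⟪x - y, u - v⟫

def IsCocoercive {E : Type*} [NormedAddCommGroup E] [InnerProductSpace ℝ E]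
    (β : ℝ) (F : E → E) : Prop :=
  ∀ x y, β * ‖F x - F y‖ ^ 2 ≤ ⟪F x - F y, x - y⟫

theorem two_mul_mul_le_mul_sq_add_sq_div {a : ℝ} (ha : 0 < a) (s r : ℝ) :
    2 * (s * r) ≤ a * s ^ 2 + r ^ 2 / a := by
  have hsq : 0 ≤ (a * s - r) ^ 2 / a := by positivity
  have hexp : (a * s - r) ^ 2 / a = a * s ^ 2 + r ^ 2 / a - 2 * (s * r) := by
    field_simp
    ring
  linarith

theorem exists_pos_lt_and_div_lt {l P Q : ℝ} (hl : 0 ≤ l) (hQ : 0 < Q) (h : l < P * Q) :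
    ∃ a, 0 < a ∧ a < P ∧ l / a < Q := by
  obtain ⟨a, hla, haP⟩ := exists_between ((div_lt_iff₀ hQ).2 h)
  have ha : 0 < a := (div_nonneg hl hQ.le).trans_lt hla
  refine ⟨a, ha, haP, (div_lt_iff₀ ha).2 ?_⟩
  rw [mul_comm]
  exact (div_lt_iff₀ hQ).1 hla

theorem tendsto_zero_of_add_mul_sq_norm_le {X : Type*} [NormedAddCommGroup X]
    {E : ℕ → ℝ} {v : ℕ → X} {c : ℝ} (hE : ∀ k, 0 ≤ E k) (hc : 0 < c)
    (h : ∀ k, E (k + 1) + c * ‖v k‖ ^ 2 ≤ E k) :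
    Tendsto v atTop (𝓝 0) := by
  have hanti : Antitone E := antitone_nat_of_succ_le fun k => by
    have hv : 0 ≤ c * ‖v k‖ ^ 2 := by positivity
    linarith [h k]
  have hlim := tendsto_atTop_ciInf hanti ⟨0, by rintro _ ⟨k, rfl⟩; exact hE k⟩
  have hdrop : Tendsto (fun k => (E k - E (k + 1)) / c) atTop (𝓝 0) := by
    simpa using (hlim.sub (hlim.comp (tendsto_add_atTop_nat 1))).div_const c
  have hsq : Tendsto (fun k => ‖v k‖ ^ 2) atTop (𝓝 0) :=
    squeeze_zero (fun k => by positivity) (fun k => (le_div_iff₀' hc).2 (by linarith [h k])) hdrop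
  rw [tendsto_zero_iff_norm_tendsto_zero]
  simpa using hsq.sqrt

theorem exists_norm_le_of_mul_sq_norm_sub_le {X : Type*} [NormedAddCommGroup X]
    {x : ℕ → X} {c K : ℝ} (xh : X) (hc : 0 < c) (h : ∀ k, c * ‖x k - xh‖ ^ 2 ≤ K) :
    ∃ M, ∀ k, ‖x k‖ ≤ M := by
  refine ⟨‖xh‖ + (1 + K / c), fun k => ?_⟩
  have hsq : ‖x k - xh‖ ^ 2 ≤ K / c := (le_div_iff₀' hc).2 (h k)
  have hle : ‖x k - xh‖ ≤ 1 + ‖x k - xh‖ ^ 2 := by nlinarith [sq_nonneg (‖x k - xh‖ - 1)]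
  calc ‖x k‖ = ‖xh + (x k - xh)‖ := by rw [add_sub_cancel]
    _ ≤ ‖xh‖ + ‖x k - xh‖ := norm_add_le _ _
    _ ≤ ‖xh‖ + (1 + K / c) := by linarith

theorem exists_norm_le_of_tendsto_sub {X : Type*} [NormedAddCommGroup X] {p x : ℕ → X}
    (hx : ∃ M, ∀ k, ‖x k‖ ≤ M) (h : Tendsto (fun k => p (k + 1) - x k) atTop (𝓝 0)) :
    ∃ M, ∀ k, ‖p k‖ ≤ M := by
  obtain ⟨M, hM⟩ := hx
  obtain ⟨N, hN⟩ := h.norm.bddAbove_range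
  refine ⟨max ‖p 0‖ (N + M), fun k => ?_⟩
  rcases k with _ | k
  · exact le_max_left _ _
  · refine le_max_of_le_right ?_
    calc ‖p (k + 1)‖ = ‖(p (k + 1) - x k) + x k‖ := by rw [sub_add_cancel]
      _ ≤ ‖p (k + 1) - x k‖ + ‖x k‖ := norm_add_le _ _
      _ ≤ N + M := add_le_add (hN ⟨k, rfl⟩) (hM k)

section InnerProductSpace

variable {E : Type*} [NormedAddCommGroup E] [InnerProductSpace ℝ E]

theorem IsCocoercive.neg_le_two_inner {β : ℝ} {F : E → E} (hF : IsCocoercive β F) (hβ : 0 < β)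
    (z zh e : E) : -((2 * β)⁻¹ * ‖e‖ ^ 2) ≤ 2 * ⟪z - zh + e, F z - F zh⟫ := by
  have hyoung := two_mul_mul_le_mul_sq_add_sq_div (by positivity : 0 < 2 * β)
    ‖F z - F zh‖ ‖e‖
  have hcs := real_inner_le_norm (-e) (F z - F zh)
  rw [inner_neg_left, norm_neg] at hcs
  rw [inner_add_left, real_inner_comm]
  have hcoco := hF z zh
  have hdiv : ‖e‖ ^ 2 / (2 * β) = (2 * β)⁻¹ * ‖e‖ ^ 2 := by ring
  linarith

theorem forward_backward_step_le {M : E → Set E} {F : E → E} {β σ : ℝ} (hM : IsMonotoneOperator M)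
    (hF : IsCocoercive β F) (hβ : 0 < β) {z z' zh w wh : E}
    (hz' : σ⁻¹ • (z - z') + w - F z ∈ M z') (hzh : wh - F zh ∈ M zh) :
    σ⁻¹ * ‖z' - zh‖ ^ 2 ≤
      σ⁻¹ * ‖z - zh‖ ^ 2 - (σ⁻¹ - (2 * β)⁻¹) * ‖z' - z‖ ^ 2 + 2 * ⟪z' - zh, w - wh⟫ := by
  have hmono := hM _ _ _ _ hz' hzh
  have hsplit : σ⁻¹ • (z - z') + w - F z - (wh - F zh) =
      σ⁻¹ • (z - z') + (w - wh) - (F z - F zh) := by abel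
  rw [hsplit, inner_sub_right, inner_add_right, real_inner_smul_right] at hmono
  have hF' := hF.neg_le_two_inner hβ z zh (z' - z)
  rw [show z - zh + (z' - z) = z' - zh by abel] at hF'
  have hpol : ‖z - zh‖ ^ 2 = ‖z' - zh‖ ^ 2 + 2 * ⟪z' - zh, z - z'⟫ + ‖z' - z‖ ^ 2 := by
    rw [← norm_neg (z' - z), neg_sub, ← norm_add_sq_real, show z' - zh + (z - z') = z - zh by abel]
  have hσpol : σ⁻¹ * ‖z - zh‖ ^ 2 =
      σ⁻¹ * ‖z' - zh‖ ^ 2 + 2 * (σ⁻¹ * ⟪z' - zh, z - z'⟫) + σ⁻¹ * ‖z' - z‖ ^ 2 := by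
    rw [hpol]; ring
  linarith

theorem Submodule.norm_sub_sq_eq_norm_starProjection_sub_sq_add (K : Submodule ℝ E)
    [K.HasOrthogonalProjection] (x : E) {v : E} (hv : v ∈ K) :
    ‖x - v‖ ^ 2 = ‖K.starProjection x - v‖ ^ 2 + ‖x - K.starProjection x‖ ^ 2 := by
  have horth := K.starProjection_inner_eq_zero x _ (K.sub_mem (K.starProjection_apply_mem x) hv)
  rw [← sub_add_sub_cancel x (K.starProjection x) v, norm_add_sq_real, horth]
  ring

end InnerProductSpace

section PrimalDual

variable {H G : Type*} [NormedAddCommGroup H] [InnerProductSpace ℝ H]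
  [NormedAddCommGroup G] [InnerProductSpace ℝ G]

theorem two_inner_apply_le (L : H →L[ℝ] G) {a : ℝ} (ha : 0 < a) (e : H) (w : G) :
    2 * ⟪L e, w⟫ ≤ a * ‖e‖ ^ 2 + ‖L‖ ^ 2 / a * ‖w‖ ^ 2 :=
  calc 2 * ⟪L e, w⟫ ≤ 2 * (‖e‖ * (‖L‖ * ‖w‖)) := by
        gcongr
        exact (real_inner_le_norm _ _).trans
          ((mul_le_mul_of_nonneg_right (L.le_opNorm e) (norm_nonneg w)).trans_eq (by ring))
    _ ≤ a * ‖e‖ ^ 2 + (‖L‖ * ‖w‖) ^ 2 / a := two_mul_mul_le_mul_sq_add_sq_div ha _ _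
    _ = a * ‖e‖ ^ 2 + ‖L‖ ^ 2 / a * ‖w‖ ^ 2 := by ring

theorem two_inner_apply_starProjection_sub_le {V : Submodule ℝ G} [V.HasOrthogonalProjection]
    (L : H →L[ℝ] G) {a : ℝ} (ha : 0 < a) {e : H} {u η : G} (hu : u ∈ V ∨ e = 0) :
    2 * ⟪L e, V.starProjection η - u⟫ ≤ a * ‖e‖ ^ 2 + ‖L‖ ^ 2 / a * ‖η - u‖ ^ 2 := by
  rcases hu with hu | rfl
  · have hnonexp : ‖V.starProjection η - u‖ ^ 2 ≤ ‖η - u‖ ^ 2 := by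
      rw [V.norm_sub_sq_eq_norm_starProjection_sub_sq_add η hu]
      exact le_add_of_nonneg_right (sq_nonneg _)
    calc _ ≤ a * ‖e‖ ^ 2 + ‖L‖ ^ 2 / a * ‖V.starProjection η - u‖ ^ 2 :=
          two_inner_apply_le L ha _ _
      _ ≤ _ := by gcongr
  · simp only [map_zero, inner_zero_left, norm_zero, mul_zero, zero_pow two_ne_zero, zero_add]
    positivity

-- `e` stands for the extrapolation `x̄ᵏ - xᵏ`.
noncomputable def pdEnergy (L : H →L[ℝ] G) (τ γ a : ℝ) (xh : H) (uh : G) (x e : H) (u : G) : ℝ :=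
  τ⁻¹ * ‖x - xh‖ ^ 2 + γ⁻¹ * ‖u - uh‖ ^ 2 + 2 * ⟪L e, u - uh⟫ + a * ‖e‖ ^ 2

theorem le_pdEnergy (L : H →L[ℝ] G) (τ γ : ℝ) {a : ℝ} (ha : 0 < a) (xh : H) (uh : G)
    (x e : H) (u : G) :
    τ⁻¹ * ‖x - xh‖ ^ 2 + (γ⁻¹ - ‖L‖ ^ 2 / a) * ‖u - uh‖ ^ 2 ≤ pdEnergy L τ γ a xh uh x e u := by
  have hyoung := two_inner_apply_le L ha e (-(u - uh))
  rw [inner_neg_right, norm_neg] at hyoung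
  unfold pdEnergy
  linarith

theorem pdEnergy_descent_bounded_and_tendsto {L : H →L[ℝ] G} {τ γ a cP cQ cT : ℝ} {xh : H}
    {uh : G} {x p xb : ℕ → H} {u η : ℕ → G} (hτ : 0 < τ) (ha : 0 < a) (hγL : ‖L‖ ^ 2 / a < γ⁻¹)
    (hstep : ∀ k, pdEnergy L τ γ a xh uh (x (k + 1)) (xb (k + 1) - x (k + 1)) (u (k + 1))
      + cP * ‖p (k + 1) - x k‖ ^ 2 + cQ * ‖η (k + 1) - u k‖ ^ 2
      + γ⁻¹ * ‖u (k + 1) - η (k + 1)‖ ^ 2 + cT * ‖x (k + 1) - p (k + 1)‖ ^ 2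
      ≤ pdEnergy L τ γ a xh uh (x k) (xb k - x k) (u k))
    (hcP : 0 < cP) (hcQ : 0 < cQ) (hcT : 0 < cT) :
    (∃ M : ℝ, ∀ k, ‖p k‖ ≤ M) ∧ (∃ M : ℝ, ∀ k, ‖η k‖ ≤ M) ∧
      Tendsto (fun k => x k - p k) atTop (𝓝 0) ∧
      Tendsto (fun k => u k - η k) atTop (𝓝 0) ∧
      Tendsto (fun k => η (k + 1) - u k) atTop (𝓝 0) ∧
      Tendsto (fun k => p (k + 1) - x k) atTop (𝓝 0) := by
  set E : ℕ → ℝ := fun k => pdEnergy L τ γ a xh uh (x k) (xb k - x k) (u k)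
  have hγL' : 0 < γ⁻¹ - ‖L‖ ^ 2 / a := sub_pos.2 hγL
  have hγ : 0 < γ⁻¹ := (div_nonneg (sq_nonneg _) ha.le).trans_lt hγL
  have hlow : ∀ k, τ⁻¹ * ‖x k - xh‖ ^ 2 + (γ⁻¹ - ‖L‖ ^ 2 / a) * ‖u k - uh‖ ^ 2 ≤ E k :=
    fun k => le_pdEnergy L τ γ ha xh uh (x k) (xb k - x k) (u k)
  have hx_nonneg : ∀ k, 0 ≤ τ⁻¹ * ‖x k - xh‖ ^ 2 := fun k => by positivity
  have hu_nonneg : ∀ k, 0 ≤ (γ⁻¹ - ‖L‖ ^ 2 / a) * ‖u k - uh‖ ^ 2 := fun k => by positivity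
  have hE : ∀ k, 0 ≤ E k := fun k => by linarith [hlow k, hx_nonneg k, hu_nonneg k]
  have hP : ∀ k, 0 ≤ cP * ‖p (k + 1) - x k‖ ^ 2 := fun k => by positivity
  have hQ : ∀ k, 0 ≤ cQ * ‖η (k + 1) - u k‖ ^ 2 := fun k => by positivity
  have hR : ∀ k, 0 ≤ γ⁻¹ * ‖u (k + 1) - η (k + 1)‖ ^ 2 := fun k => by positivity
  have hT : ∀ k, 0 ≤ cT * ‖x (k + 1) - p (k + 1)‖ ^ 2 := fun k => by positivity
  have hanti : Antitone E :=
    antitone_nat_of_succ_le fun k => by linarith [hstep k, hP k, hQ k, hR k, hT k]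
  have hxp := tendsto_zero_of_add_mul_sq_norm_le (v := fun k => p (k + 1) - x k) hE hcP fun k => by
    linarith [hstep k, hQ k, hR k, hT k]
  have hηu := tendsto_zero_of_add_mul_sq_norm_le (v := fun k => η (k + 1) - u k) hE hcQ fun k => by
    linarith [hstep k, hP k, hR k, hT k]
  have hx_bdd : ∃ M, ∀ k, ‖x k‖ ≤ M :=
    exists_norm_le_of_mul_sq_norm_sub_le xh (inv_pos.2 hτ) (K := E 0) fun k => by
      linarith [hlow k, hu_nonneg k, hanti (Nat.zero_le k)]
  have hu_bdd : ∃ M, ∀ k, ‖u k‖ ≤ M :=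
    exists_norm_le_of_mul_sq_norm_sub_le uh hγL' (K := E 0) fun k => by
      linarith [hlow k, hx_nonneg k, hanti (Nat.zero_le k)]
  refine ⟨exists_norm_le_of_tendsto_sub hx_bdd hxp, exists_norm_le_of_tendsto_sub hu_bdd hηu,
    (tendsto_add_atTop_iff_nat 1).1 ?_, (tendsto_add_atTop_iff_nat 1).1 ?_, hηu, hxp⟩
  · exact tendsto_zero_of_add_mul_sq_norm_le (v := fun k => x (k + 1) - p (k + 1)) hE hcT
      fun k => by linarith [hstep k, hP k, hQ k, hR k]
  · exact tendsto_zero_of_add_mul_sq_norm_le (v := fun k => u (k + 1) - η (k + 1)) hE hγ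
      fun k => by linarith [hstep k, hP k, hQ k, hT k]

variable [CompleteSpace H] [CompleteSpace G]

theorem pdEnergy_succ_add_le {V : Submodule ℝ G} [V.HasOrthogonalProjection]
    {L : H →L[ℝ] G} (hran : ∀ z, L z ∈ V) {A : H → Set H} {B : G → Set G} {C : H → H}
    {D : G → G} {β δ τ γ a κ : ℝ} (hA : IsMonotoneOperator A) (hB : IsMonotoneOperator B)
    (hC : IsCocoercive β C) (hD : IsCocoercive δ D) (hβ : 0 < β) (hδ : 0 < δ) (hτ : 0 < τ)
    (ha : 0 < a) {xh : H} {uh : G} (huh : uh ∈ V)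
    (hAh : -(ContinuousLinearMap.adjoint L) uh - C xh ∈ A xh) (hBh : L xh - D uh ∈ B uh)
    {x xb p' x' : H} {u η' u' : G} (hη' : γ⁻¹ • (u - η') + L xb - D u ∈ B η')
    (hu' : u' = (V.orthogonalProjectionOnto η' : G))
    (hp' : τ⁻¹ • (x - p') - (ContinuousLinearMap.adjoint L) u' - C x ∈ A p')
    (hx' : ‖x' - xh‖ ^ 2 ≤ ‖p' - xh‖ ^ 2 - κ * ‖p' - x'‖ ^ 2) (hu : u ∈ V ∨ xb = x) :
    pdEnergy L τ γ a xh uh x' (p' - x) u' + (τ⁻¹ - (2 * β)⁻¹ - a) * ‖p' - x‖ ^ 2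
      + (γ⁻¹ - (2 * δ)⁻¹ - ‖L‖ ^ 2 / a) * ‖η' - u‖ ^ 2 + γ⁻¹ * ‖u' - η'‖ ^ 2
      + τ⁻¹ * κ * ‖x' - p'‖ ^ 2 ≤ pdEnergy L τ γ a xh uh x (xb - x) u := by
  rw [← V.starProjection_apply] at hu'
  have hprimal := forward_backward_step_le hA hC hβ (by rwa [← sub_eq_add_neg]) hAh
  have hprimal_inner : ⟪p' - xh, -(ContinuousLinearMap.adjoint L) u'
      - -(ContinuousLinearMap.adjoint L) uh⟫ = -⟪L (p' - xh), u' - uh⟫ := by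
    rw [neg_sub_neg, ← map_sub, ContinuousLinearMap.adjoint_inner_right, ← neg_sub u' uh,
      inner_neg_right]
  have hdual := forward_backward_step_le hB hD hδ hη' hBh
  have hdual_inner : ⟪η' - uh, L xb - L xh⟫ = ⟪L (xb - xh), u' - uh⟫ := by
    have horth := V.starProjection_inner_eq_zero η' _ (hran (xb - xh))
    rw [← hu'] at horth
    rw [← map_sub, ← sub_add_sub_cancel η' u' uh, inner_add_left, horth, zero_add,
      real_inner_comm]
  have hpyth : γ⁻¹ * ‖η' - uh‖ ^ 2 = γ⁻¹ * ‖u' - uh‖ ^ 2 + γ⁻¹ * ‖η' - u'‖ ^ 2 := by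
    rw [hu', V.norm_sub_sq_eq_norm_starProjection_sub_sq_add η' huh, mul_add]
  have hcross : 2 * ⟪L (xb - x), u' - u⟫ ≤ a * ‖xb - x‖ ^ 2 + ‖L‖ ^ 2 / a * ‖η' - u‖ ^ 2 := by
    rw [hu']
    exact two_inner_apply_starProjection_sub_le L ha (hu.imp_right sub_eq_zero.2)
  have hsplit : ⟪L (xb - xh), u' - uh⟫ - ⟪L (p' - xh), u' - uh⟫ =
      ⟪L (xb - x), u - uh⟫ + ⟪L (xb - x), u' - u⟫ - ⟪L (p' - x), u' - uh⟫ := by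
    simp only [map_sub, inner_sub_left, inner_sub_right]
    ring
  have hT := mul_le_mul_of_nonneg_left hx' (inv_pos.2 hτ).le
  rw [norm_sub_rev u', norm_sub_rev x']
  unfold pdEnergy
  linarith

end PrimalDual

theorem stmt_12_general {H G : Type*}
    [NormedAddCommGroup H] [InnerProductSpace ℝ H] [CompleteSpace H]
    [NormedAddCommGroup G] [InnerProductSpace ℝ G] [CompleteSpace G]
    (V : Submodule ℝ G) [CompleteSpace V]
    (L : H →L[ℝ] G) (hran : ∀ z, L z ∈ V)
    (β δ : ℝ) (hβ : 0 < β) (hδ : 0 < δ)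
    (A : H → Set H)
    (hA : ∀ x y u v, u ∈ A x → v ∈ A y → 0 ≤ ⟪x - y, u - v⟫)
    (B : G → Set G)
    (hB : ∀ x y u v, u ∈ B x → v ∈ B y → 0 ≤ ⟪x - y, u - v⟫)
    (C : H → H) (hC : ∀ x y, β * ‖C x - C y‖ ^ 2 ≤ ⟪C x - C y, x - y⟫)
    (D : G → G) (hD : ∀ x y, δ * ‖D x - D y‖ ^ 2 ≤ ⟪D x - D y, x - y⟫)
    (α : ℝ) (hα : α ∈ Set.Ioo (0 : ℝ) 1)
    (T : H → H)
    (hT : ∀ z y, T y = y → ‖T z - y‖ ^ 2 ≤ ‖z - y‖ ^ 2 - ((1 - α) / α) * ‖z - T z‖ ^ 2)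
    (τ γ : ℝ) (hτ : τ ∈ Set.Ioo (0 : ℝ) (2 * β)) (hγ : γ ∈ Set.Ioo (0 : ℝ) (2 * δ))
    (hpar : ‖L‖ ^ 2 < (1 / τ - 1 / (2 * β)) * (1 / γ - 1 / (2 * δ)))
    (x p xb : ℕ → H) (u η : ℕ → G)
    (hxb0 : xb 0 = x 0)
    (halg1 : ∀ k, γ⁻¹ • (u k - η (k + 1)) + L (xb k) - D (u k) ∈ B (η (k + 1)))
    (halg2 : ∀ k, u (k + 1) = (V.orthogonalProjectionOnto (η (k + 1)) : G))
    (halg3 : ∀ k, τ⁻¹ • (x k - p (k + 1))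
        - (ContinuousLinearMap.adjoint L) (u (k + 1)) - C (x k) ∈ A (p (k + 1)))
    (halg4 : ∀ k, x (k + 1) = T (p (k + 1)))
    (halg5 : ∀ k, xb (k + 1) = x (k + 1) + (p (k + 1) - x k))
    (hexists : ∃ (x0 : H) (u0 : G), T x0 = x0 ∧ u0 ∈ V ∧
      -(ContinuousLinearMap.adjoint L) u0 - C x0 ∈ A x0 ∧ L x0 - D u0 ∈ B u0) :
    (∃ M : ℝ, ∀ k, ‖p k‖ ≤ M) ∧ (∃ M : ℝ, ∀ k, ‖η k‖ ≤ M) ∧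
      Tendsto (fun k => x k - p k) atTop (𝓝 0) ∧
      Tendsto (fun k => u k - η k) atTop (𝓝 0) ∧
      Tendsto (fun k => η (k + 1) - u k) atTop (𝓝 0) ∧
      Tendsto (fun k => p (k + 1) - x k) atTop (𝓝 0) := by
  obtain ⟨xh, uh, hxh, huh, hAh, hBh⟩ := hexists
  obtain ⟨hτ0, -⟩ := hτ
  obtain ⟨hγ0, hγδ⟩ := hγ
  obtain ⟨hα0, hα1⟩ := hα
  have hQ : 0 < γ⁻¹ - (2 * δ)⁻¹ := sub_pos.2 ((inv_lt_inv₀ (by linarith) hγ0).2 hγδ)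
  simp only [one_div] at hpar
  obtain ⟨a, ha, haP, haQ⟩ := exists_pos_lt_and_div_lt (sq_nonneg ‖L‖) hQ hpar
  -- `u 0` need not lie in `V`, but then the first extrapolation vanishes
  have hu : ∀ k, u k ∈ V ∨ xb k = x k := by
    rintro (_ | k)
    · exact .inr hxb0
    · exact .inl (halg2 k ▸ Submodule.coe_mem _)
  have hTk : ∀ k, ‖x (k + 1) - xh‖ ^ 2 ≤
      ‖p (k + 1) - xh‖ ^ 2 - (1 - α) / α * ‖p (k + 1) - x (k + 1)‖ ^ 2 := fun k => by
    rw [halg4]; exact hT _ _ hxh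
  have hγL : ‖L‖ ^ 2 / a < γ⁻¹ := haQ.trans (sub_lt_self _ (by positivity))
  have hκ : 0 < τ⁻¹ * ((1 - α) / α) := by
    have := sub_pos.2 hα1
    positivity
  exact pdEnergy_descent_bounded_and_tendsto (xb := xb) hτ0 ha hγL (fun k => by
    rw [halg5 k, add_sub_cancel_left]
    exact pdEnergy_succ_add_le hran hA hB hC hD hβ hδ hτ0 ha huh hAh hBh
      (halg1 k) (halg2 k) (halg3 k) (hTk k) (hu k)) (sub_pos.2 haP) (sub_pos.2 haQ) hκ

/-- In the monotone case with θ ≡ 1, constant step sizes and strict parameter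
condition, the sequences (p^k), (η^k) are bounded and the residuals
x^k − p^k, u^k − η^k, η^{k+1} − u^k, p^{k+1} − x^k converge strongly to 0. -/
theorem stmt_12 {H G : Type*}
    [NormedAddCommGroup H] [InnerProductSpace ℝ H] [CompleteSpace H]
    [NormedAddCommGroup G] [InnerProductSpace ℝ G] [CompleteSpace G]
    (V : Submodule ℝ G) [CompleteSpace V]
    (L : H →L[ℝ] G) (hL0 : L ≠ 0) (hran : ∀ z, L z ∈ V)
    (β δ : ℝ) (hβ : 0 < β) (hδ : 0 < δ)
    (A : H → Set H)
    (hA : ∀ x y u v, u ∈ A x → v ∈ A y → 0 ≤ ⟪x - y, u - v⟫)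
    (B : G → Set G)
    (hB : ∀ x y u v, u ∈ B x → v ∈ B y → 0 ≤ ⟪x - y, u - v⟫)
    (C : H → H) (hC : ∀ x y, β * ‖C x - C y‖ ^ 2 ≤ ⟪C x - C y, x - y⟫)
    (D : G → G) (hD : ∀ x y, δ * ‖D x - D y‖ ^ 2 ≤ ⟪D x - D y, x - y⟫)
    (α : ℝ) (hα : α ∈ Set.Ioo (0 : ℝ) 1)
    (T : H → H) (hTfix : ∃ z, T z = z)
    (hT : ∀ z y, T y = y → ‖T z - y‖ ^ 2 ≤ ‖z - y‖ ^ 2 - ((1 - α) / α) * ‖z - T z‖ ^ 2)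
    (τ γ : ℝ) (hτ : τ ∈ Set.Ioo (0 : ℝ) (2 * β)) (hγ : γ ∈ Set.Ioo (0 : ℝ) (2 * δ))
    (hpar : ‖L‖ ^ 2 < (1 / τ - 1 / (2 * β)) * (1 / γ - 1 / (2 * δ)))
    (x p xb : ℕ → H) (u η : ℕ → G)
    (hxb0 : xb 0 = x 0)
    (halg1 : ∀ k, γ⁻¹ • (u k - η (k + 1)) + L (xb k) - D (u k) ∈ B (η (k + 1)))
    (halg2 : ∀ k, u (k + 1) = (V.orthogonalProjectionOnto (η (k + 1)) : G))
    (halg3 : ∀ k, τ⁻¹ • (x k - p (k + 1))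
        - (ContinuousLinearMap.adjoint L) (u (k + 1)) - C (x k) ∈ A (p (k + 1)))
    (halg4 : ∀ k, x (k + 1) = T (p (k + 1)))
    (halg5 : ∀ k, xb (k + 1) = x (k + 1) + (p (k + 1) - x k))
    (hexists : ∃ (x0 : H) (u0 : G), T x0 = x0 ∧ u0 ∈ V ∧
      -(ContinuousLinearMap.adjoint L) u0 - C x0 ∈ A x0 ∧ L x0 - D u0 ∈ B u0) :
    (∃ M : ℝ, ∀ k, ‖p k‖ ≤ M) ∧ (∃ M : ℝ, ∀ k, ‖η k‖ ≤ M) ∧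
      Tendsto (fun k => x k - p k) atTop (𝓝 0) ∧
      Tendsto (fun k => u k - η k) atTop (𝓝 0) ∧
      Tendsto (fun k => η (k + 1) - u k) atTop (𝓝 0) ∧
      Tendsto (fun k => p (k + 1) - x k) atTop (𝓝 0) :=
  stmt_12_general V L hran β δ hβ hδ A hA B hB C hC D hD α hα T hT τ γ hτ hγ hpar x p xb u η hxb0
    halg1 halg2 halg3 halg4 halg5 hexists
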